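/- Rescaling logits by the log of an arbitrary positive function of the input preserves the posterior but changes the energy score pointwise: for any set X, any logit map f : X → ℝ^C, and any φ : X → ℝ with φ(x) > 0 for all x, define f'(x)_j = f(x)_j + τ · log φ(x). Then for every x ∈ X and every class c, exp(f'(x)_c/τ) / Σ_j exp(f'(x)_j/τ) = exp(f(x)_c/τ) / Σ_j exp(f(x)_j/τ), while the energy scores satisfy E(x; f') = E(x; f) − τ · log φ(x); hence whenever φ(x) ≠ 1 the two models have identical posteriors at x but different energy scores at x. -/
import Mathlib


open Finset Real

/-- Rescaling logits by the log of an arbitrary positive function of the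
input preserves the posterior but changes the energy score pointwise: for any set `X`,
any logit map `f : X → ℝ^C`, and any `φ : X → ℝ` with `φ(x) > 0` for all `x`, define
`f'(x)_j = f(x)_j + τ · log φ(x)`. Then for every `x` and every class `c` the softmax
posteriors of `f'` and `f` agree, while the energy scores satisfy
`E(x; f') = E(x; f) − τ · log φ(x)`; hence whenever `φ(x) ≠ 1` the two models have
identical posteriors at `x` but different energy scores at `x`. -/
theorem energy_rescaling_misalignment (C : ℕ) (hC : 1 ≤ C) (τ : ℝ) (hτ : 0 < τ)
    {X : Type*} (f f' : X → Fin C → ℝ) (φ : X → ℝ) (hφ : ∀ x, 0 < φ x)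
    (hf' : ∀ x j, f' x j = f x j + τ * Real.log (φ x)) :
    (∀ (x : X) (c : Fin C),
      Real.exp (f' x c / τ) / (∑ j : Fin C, Real.exp (f' x j / τ)) =
        Real.exp (f x c / τ) / (∑ j : Fin C, Real.exp (f x j / τ))) ∧
    (∀ x : X,
      -τ * Real.log (∑ j : Fin C, Real.exp (f' x j / τ)) =
        -τ * Real.log (∑ j : Fin C, Real.exp (f x j / τ)) - τ * Real.log (φ x)) ∧
    (∀ x : X, φ x ≠ 1 →
      -τ * Real.log (∑ j : Fin C, Real.exp (f' x j / τ)) ≠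
        -τ * Real.log (∑ j : Fin C, Real.exp (f x j / τ))) := by
  have hexp : ∀ (x : X) (j : Fin C),
      Real.exp (f' x j / τ) = Real.exp (f x j / τ) * φ x := by
    intro x j
    rw [hf' x j, add_div, mul_div_cancel_left₀ _ hτ.ne', Real.exp_add, Real.exp_log (hφ x)]
  have hsum : ∀ x : X,
      (∑ j : Fin C, Real.exp (f' x j / τ)) = (∑ j : Fin C, Real.exp (f x j / τ)) * φ x := by
    intro x
    rw [Finset.sum_mul]
    exact Finset.sum_congr rfl fun j _ => hexp x j
  have hSpos : ∀ x : X, 0 < ∑ j : Fin C, Real.exp (f x j / τ) := by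
    intro x
    apply Finset.sum_pos (fun j _ => Real.exp_pos _)
    exact Finset.univ_nonempty_iff.mpr ⟨⟨0, hC⟩⟩
  have hE : ∀ x : X,
      -τ * Real.log (∑ j : Fin C, Real.exp (f' x j / τ)) =
        -τ * Real.log (∑ j : Fin C, Real.exp (f x j / τ)) - τ * Real.log (φ x) := by
    intro x
    rw [hsum x, Real.log_mul (hSpos x).ne' (hφ x).ne']
    ring
  refine ⟨fun x c => ?_, hE, fun x hx1 => ?_⟩
  · rw [hexp x c, hsum x, mul_div_mul_right _ _ (hφ x).ne']
  · rw [hE x]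
    intro h
    have : τ * Real.log (φ x) = 0 := by linarith [sub_eq_self.mp h]
    rcases mul_eq_zero.mp this with h' | h'
    · exact hτ.ne' h'
    · exact hx1 (by rw [← Real.exp_log (hφ x), h', Real.exp_zero])
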